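/- arXiv:1703.05688 — 4 statements merged into one kernel-verified Lean document; each statement's English description precedes it below -/
import Mathlib

section
/- For all multi-indices α, β ∈ ℕ^n and every 1 ≤ j ≤ n, the function f_{α,β} = b^α (z^β exp(−(π/2) Σ_{i=1}^n |z_i|²)) on ℂ^n, where b^α = b_1^{α_1} ⋯ b_n^{α_n}, satisfies b_j b_j^+ f_{α,β} = 4π α_j f_{α,β}. -/
open MeasureTheory Complex

noncomputable section

/-- The Wirtinger derivative `∂/∂z_j` of a function on `ℂⁿ ≅ ℝ^{2n}`. -/
def wirtingerD {n : ℕ} (j : Fin n) (f : (Fin n → ℂ) → ℂ) (z : Fin n → ℂ) : ℂ :=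
  (1 / 2) * (fderiv ℝ f z (Pi.single j 1) - Complex.I * fderiv ℝ f z (Pi.single j Complex.I))

/-- The Wirtinger derivative `∂/∂z̄_j` of a function on `ℂⁿ ≅ ℝ^{2n}`. -/
def wirtingerDBar {n : ℕ} (j : Fin n) (f : (Fin n → ℂ) → ℂ) (z : Fin n → ℂ) : ℂ :=
  (1 / 2) * (fderiv ℝ f z (Pi.single j 1) + Complex.I * fderiv ℝ f z (Pi.single j Complex.I))

/-- The creation operator `b_j = -2 ∂/∂z_j + π z̄_j`. -/
def bOp {n : ℕ} (j : Fin n) (f : (Fin n → ℂ) → ℂ) : (Fin n → ℂ) → ℂ :=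
  fun z => -2 * wirtingerD j f z + (Real.pi : ℂ) * (starRingEnd ℂ) (z j) * f z

/-- The annihilation operator `b_j⁺ = 2 ∂/∂z̄_j + π z_j`. -/
def bPlusOp {n : ℕ} (j : Fin n) (f : (Fin n → ℂ) → ℂ) : (Fin n → ℂ) → ℂ :=
  fun z => 2 * wirtingerDBar j f z + (Real.pi : ℂ) * z j * f z

/-- The Gaussian `exp(-(π/2) Σ |z_i|²)`. -/
def gaussFn {n : ℕ} (z : Fin n → ℂ) : ℂ :=
  Complex.exp (-((Real.pi : ℂ) / 2) * ∑ i, (Complex.normSq (z i) : ℂ))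

/-- The iterated operator `b^α = b_1^{α_1} ∘ ⋯ ∘ b_n^{α_n}`. -/
def bPow {n : ℕ} (α : Fin n → ℕ) (f : (Fin n → ℂ) → ℂ) : (Fin n → ℂ) → ℂ :=
  (List.ofFn (fun j : Fin n => (bOp j)^[α j])).foldr (· ∘ ·) id f

/-- The eigenfunctions `f_{α,β} = b^α (z^β exp(-(π/2) Σ |z_i|²))` of the model operator. -/
def eigFun {n : ℕ} (α β : Fin n → ℕ) : (Fin n → ℂ) → ℂ :=
  bPow α (fun z => (∏ j, z j ^ β j) * gaussFn z)

/-- The model Bergman kernel `𝒫(z,w) = exp(-(π/2) Σ (|z_j|² + |w_j|² - 2 z_j w̄_j))`. -/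
def bergK {n : ℕ} (z w : Fin n → ℂ) : ℂ :=
  Complex.exp (-((Real.pi : ℂ) / 2) *
    ∑ j, ((Complex.normSq (z j) : ℂ) + (Complex.normSq (w j) : ℂ)
            - 2 * z j * (starRingEnd ℂ) (w j)))

/-- `F : ℂⁿ × ℂⁿ → ℂ` is a polynomial function in the underlying real coordinates, equivalently
a polynomial in the coordinates `z_i, z̄_i` of the first argument and `z'_i, z̄'_i` of the
second one. -/
def IsPolyKernel {n : ℕ} (F : (Fin n → ℂ) → (Fin n → ℂ) → ℂ) : Prop :=
  ∃ p : MvPolynomial (Fin n ⊕ Fin n ⊕ Fin n ⊕ Fin n) ℂ,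
    ∀ z z' : Fin n → ℂ,
      F z z' = MvPolynomial.eval
        (Sum.elim (fun i => z i) (Sum.elim (fun i => (starRingEnd ℂ) (z i))
          (Sum.elim (fun i => z' i) (fun i => (starRingEnd ℂ) (z' i))))) p

/-- Under the identification `ℝ^{2n} ≅ ℂⁿ`, `z_j = Z_{2j-1} + i Z_{2j}`, the direction in `ℂⁿ`
corresponding to the `j`-th real coordinate `Z_j`. -/
def coordDir {n : ℕ} (j : Fin (2 * n)) : Fin n → ℂ :=
  Pi.single ⟨j.val / 2, by have := j.isLt; omega⟩ (if j.val % 2 = 0 then 1 else Complex.I)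

/-- The `j`-th real coordinate of `w ∈ ℂⁿ ≅ ℝ^{2n}`, viewed as a complex number. -/
def realCoordC {n : ℕ} (j : Fin (2 * n)) (w : Fin n → ℂ) : ℂ :=
  if j.val % 2 = 0 then ((w ⟨j.val / 2, by have := j.isLt; omega⟩).re : ℂ)
  else ((w ⟨j.val / 2, by have := j.isLt; omega⟩).im : ℂ)

/-- The partial derivative `∂/∂Z_j` in the `j`-th real coordinate of `ℂⁿ ≅ ℝ^{2n}`. -/
def realPDeriv {n : ℕ} (j : Fin (2 * n)) (f : (Fin n → ℂ) → ℂ) (z : Fin n → ℂ) : ℂ :=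
  fderiv ℝ f z (coordDir j)

/-- The iterated partial derivative `∂^α` in the real coordinates of `ℂⁿ ≅ ℝ^{2n}`,
for a multi-index `α ∈ ℕ^{2n}`. -/
def iterD {n : ℕ} (α : Fin (2 * n) → ℕ) (f : (Fin n → ℂ) → ℂ) : (Fin n → ℂ) → ℂ :=
  (List.ofFn (fun j : Fin (2 * n) =>
    (fun (g : (Fin n → ℂ) → ℂ) (z : Fin n → ℂ) => fderiv ℝ g z (coordDir j))^[α j])).foldr
    (· ∘ ·) id f


/-!
Multiplying by the Gaussian `G = exp(-(π/2) Σ |z_i|²)` turns `b_j` and `b_j⁺` into the operators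
`B_j = -2 ∂_{z_j} + 2π z̄_j` and `B_j⁺ = 2 ∂_{z̄_j}` on polynomials in `z, z̄`, with `z` and `z̄`
treated as independent variables. These satisfy the canonical commutation relations: the `B_j`
commute with each other, `B_j⁺` commutes with `B_k` for `k ≠ j`, and `B_j⁺ B_j = B_j B_j⁺ + 4π`.
Hence the number operator `N_j = B_j B_j⁺` satisfies `N_j B^α = B^α (N_j + 4π α_j)`, and since
`B_j⁺` kills the holomorphic monomial `z^β`, we get `N_j B^α z^β = 4π α_j B^α z^β`.
-/

open MvPolynomial

namespace MvPolynomial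

variable {σ : Type*}

theorem pderiv_pderiv_comm {R : Type*} [CommSemiring R] (i k : σ) (p : MvPolynomial σ R) :
    pderiv i (pderiv k p) = pderiv k (pderiv i p) := by
  classical
  induction p using MvPolynomial.induction_on with
  | C a => simp
  | add p q hp hq => simp [hp, hq]
  | mul_X p u hp =>
    simp only [pderiv_mul, map_add, pderiv_X, Pi.single_apply]
    split_ifs <;> simp [hp, add_right_comm]

variable {𝕜 : Type*} [NontriviallyNormedField 𝕜] [Fintype σ]

theorem hasFDerivAt_eval (p : MvPolynomial σ 𝕜) (x : σ → 𝕜) :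
    HasFDerivAt (fun x => eval x p)
      (∑ i, eval x (pderiv i p) • (ContinuousLinearMap.proj i : (σ → 𝕜) →L[𝕜] 𝕜)) x := by
  classical
  induction p using MvPolynomial.induction_on with
  | C a =>
    simp only [eval_C]
    exact (hasFDerivAt_const a x).congr_fderiv (by ext v; simp)
  | add p q hp hq =>
    simp only [map_add]
    exact (hp.add hq).congr_fderiv (by ext v; simp [add_mul, Finset.sum_add_distrib])
  | mul_X p u hp =>
    simp only [map_mul, eval_X]
    refine (hp.mul (hasFDerivAt_apply u x)).congr_fderiv ?_
    ext v
    simp [pderiv_X, add_mul, Finset.sum_add_distrib, Pi.single_apply, Finset.mul_sum,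
      apply_ite (eval x), ite_mul, mul_assoc]

end MvPolynomial

-- `SemiconjBy x (N + a) N` says `N * x = x * (N + a)`: `x` shifts the eigenvalues of `N` by `a`.

namespace SemiconjBy

variable {𝕜 R : Type*} [CommSemiring 𝕜] [Semiring R] [Algebra 𝕜 R] {x N : R}

theorem add_algebraMap {y z : R} (h : SemiconjBy x y z) (b : 𝕜) :
    SemiconjBy x (y + algebraMap 𝕜 R b) (z + algebraMap 𝕜 R b) :=
  h.add_right (Algebra.commutes b x).symm

theorem pow_of_add_algebraMap {a : 𝕜} (h : SemiconjBy x (N + algebraMap 𝕜 R a) N) (m : ℕ) :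
    SemiconjBy (x ^ m) (N + algebraMap 𝕜 R (m * a)) N := by
  induction m with
  | zero => simp
  | succ m ih =>
    have step := h.add_algebraMap (m * a)
    rw [add_assoc, ← map_add, show a + m * a = (m + 1 : ℕ) * a by push_cast; ring] at step
    simpa [pow_succ] using ih.mul_left step

theorem list_ofFn_prod_of_add_algebraMap {m : ℕ} {x : Fin m → R} {a : Fin m → 𝕜}
    (h : ∀ k, SemiconjBy (x k) (N + algebraMap 𝕜 R (a k)) N) :
    SemiconjBy (List.ofFn x).prod (N + algebraMap 𝕜 R (∑ k, a k)) N := by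
  induction m with
  | zero => simp
  | succ m ih =>
    have tail := (ih fun k => h k.succ).add_algebraMap (a 0)
    rw [add_assoc, ← map_add, add_comm _ (a 0)] at tail
    simpa [List.ofFn_succ, Fin.sum_univ_succ] using (h 0).mul_left tail

end SemiconjBy

theorem Function.Semiconj.list_ofFn_pow {R V Y : Type*} [Semiring R] [AddCommMonoid V]
    [Module R V] {m : ℕ} {Φ : V → Y} {g : Fin m → Module.End R V} {F : Fin m → Y → Y}
    (h : ∀ k, Function.Semiconj Φ (g k) (F k)) (α : Fin m → ℕ) :
    Function.Semiconj Φ (List.ofFn fun k => g k ^ α k).prod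
      ((List.ofFn fun k => (F k)^[α k]).foldr (· ∘ ·) id) := by
  induction m with
  | zero => exact Function.Semiconj.id_right
  | succ m ih =>
    simp only [List.ofFn_succ, List.prod_cons, List.foldr_cons, Module.End.coe_mul,
      Module.End.coe_pow]
    exact ((h 0).iterate_right (α 0)).comp_right (ih (fun k => h k.succ) (fun k => α k.succ))

section Wirtinger

variable {n : ℕ} {f g : (Fin n → ℂ) → ℂ} {z : Fin n → ℂ} (j : Fin n)

theorem wirtingerD_mul (hf : DifferentiableAt ℝ f z) (hg : DifferentiableAt ℝ g z) :
    wirtingerD j (f * g) z = wirtingerD j f z * g z + f z * wirtingerD j g z := by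
  simp only [wirtingerD, fderiv_mul hf hg]
  simp; ring

theorem wirtingerDBar_mul (hf : DifferentiableAt ℝ f z) (hg : DifferentiableAt ℝ g z) :
    wirtingerDBar j (f * g) z = wirtingerDBar j f z * g z + f z * wirtingerDBar j g z := by
  simp only [wirtingerDBar, fderiv_mul hf hg]
  simp; ring

theorem wirtingerD_cexp (hf : DifferentiableAt ℝ f z) :
    wirtingerD j (fun w => Complex.exp (f w)) z = Complex.exp (f z) * wirtingerD j f z := by
  simp only [wirtingerD, hf.hasFDerivAt.cexp.fderiv]
  simp; ring

theorem wirtingerDBar_cexp (hf : DifferentiableAt ℝ f z) :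
    wirtingerDBar j (fun w => Complex.exp (f w)) z = Complex.exp (f z) * wirtingerDBar j f z := by
  simp only [wirtingerDBar, hf.hasFDerivAt.cexp.fderiv]
  simp; ring

end Wirtinger

section PolynomialsInZAndZBar

variable {n : ℕ}

/-- `z ↦ (z, z̄)`: a polynomial in the variables `Sum.inl i`, `Sum.inr i` is evaluated at `z` by
substituting `z_i` and `z̄_i`. -/
def zzbar : (Fin n → ℂ) →L[ℝ] (Fin n ⊕ Fin n → ℂ) :=
  ContinuousLinearMap.pi <| Sum.elim (fun i => ContinuousLinearMap.proj i)
    (fun i => Complex.conjCLE.toContinuousLinearMap ∘L ContinuousLinearMap.proj i)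

@[simp] theorem zzbar_inl (z : Fin n → ℂ) (i : Fin n) : zzbar z (Sum.inl i) = z i := rfl

@[simp] theorem zzbar_inr (z : Fin n → ℂ) (i : Fin n) :
    zzbar z (Sum.inr i) = starRingEnd ℂ (z i) := rfl

theorem hasFDerivAt_eval_zzbar (p : MvPolynomial (Fin n ⊕ Fin n) ℂ) (z : Fin n → ℂ) :
    HasFDerivAt (fun w => eval (zzbar w) p)
      ((∑ u, eval (zzbar z) (pderiv u p) •
        (ContinuousLinearMap.proj u : (Fin n ⊕ Fin n → ℂ) →L[ℂ] ℂ)).restrictScalars ℝ ∘L zzbar)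
      z :=
  ((hasFDerivAt_eval p (zzbar z)).restrictScalars ℝ).comp z zzbar.hasFDerivAt

theorem differentiableAt_eval_zzbar (p : MvPolynomial (Fin n ⊕ Fin n) ℂ) (z : Fin n → ℂ) :
    DifferentiableAt ℝ (fun w => eval (zzbar w) p) z :=
  (hasFDerivAt_eval_zzbar p z).differentiableAt

theorem fderiv_eval_zzbar_single (p : MvPolynomial (Fin n ⊕ Fin n) ℂ) (z : Fin n → ℂ)
    (j : Fin n) (c : ℂ) :
    fderiv ℝ (fun w => eval (zzbar w) p) z (Pi.single j c)
      = eval (zzbar z) (pderiv (Sum.inl j) p) * c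
        + eval (zzbar z) (pderiv (Sum.inr j) p) * starRingEnd ℂ c := by
  classical
  simp [(hasFDerivAt_eval_zzbar p z).fderiv, Fintype.sum_sum_type, Pi.single_apply,
    apply_ite (starRingEnd ℂ)]

theorem wirtingerD_eval_zzbar (p : MvPolynomial (Fin n ⊕ Fin n) ℂ) (z : Fin n → ℂ)
    (j : Fin n) :
    wirtingerD j (fun w => eval (zzbar w) p) z = eval (zzbar z) (pderiv (Sum.inl j) p) := by
  rw [wirtingerD, fderiv_eval_zzbar_single, fderiv_eval_zzbar_single]
  simp only [map_one, Complex.conj_I]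
  ring_nf
  rw [Complex.I_sq]
  ring

theorem wirtingerDBar_eval_zzbar (p : MvPolynomial (Fin n ⊕ Fin n) ℂ) (z : Fin n → ℂ)
    (j : Fin n) :
    wirtingerDBar j (fun w => eval (zzbar w) p) z = eval (zzbar z) (pderiv (Sum.inr j) p) := by
  rw [wirtingerDBar, fderiv_eval_zzbar_single, fderiv_eval_zzbar_single]
  simp only [map_one, Complex.conj_I]
  ring_nf
  rw [Complex.I_sq]
  ring

end PolynomialsInZAndZBar

section Gaussian

variable {n : ℕ}

def gaussExponent (n : ℕ) : MvPolynomial (Fin n ⊕ Fin n) ℂ :=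
  C (-(Real.pi / 2 : ℂ)) * ∑ i, X (Sum.inl i) * X (Sum.inr i)

theorem gaussFn_eq_cexp (z : Fin n → ℂ) :
    gaussFn z = Complex.exp (eval (zzbar z) (gaussExponent n)) := by
  simp [gaussFn, gaussExponent, Complex.mul_conj, Finset.mul_sum]

theorem pderiv_inl_gaussExponent (j : Fin n) :
    pderiv (Sum.inl j) (gaussExponent n) = C (-(Real.pi / 2 : ℂ)) * X (Sum.inr j) := by
  classical
  simp [gaussExponent, pderiv_X, Pi.single_apply]

theorem pderiv_inr_gaussExponent (j : Fin n) :
    pderiv (Sum.inr j) (gaussExponent n) = C (-(Real.pi / 2 : ℂ)) * X (Sum.inl j) := by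
  classical
  simp [gaussExponent, pderiv_X, Pi.single_apply]

theorem differentiableAt_gaussFn (z : Fin n → ℂ) : DifferentiableAt ℝ gaussFn z := by
  rw [funext gaussFn_eq_cexp]
  exact (differentiableAt_eval_zzbar _ z).cexp

theorem wirtingerD_gaussFn (j : Fin n) (z : Fin n → ℂ) :
    wirtingerD j gaussFn z = -(Real.pi / 2 : ℂ) * starRingEnd ℂ (z j) * gaussFn z := by
  rw [funext gaussFn_eq_cexp, wirtingerD_cexp j (differentiableAt_eval_zzbar _ z),
    wirtingerD_eval_zzbar, pderiv_inl_gaussExponent]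
  simp; ring

theorem wirtingerDBar_gaussFn (j : Fin n) (z : Fin n → ℂ) :
    wirtingerDBar j gaussFn z = -(Real.pi / 2 : ℂ) * z j * gaussFn z := by
  rw [funext gaussFn_eq_cexp, wirtingerDBar_cexp j (differentiableAt_eval_zzbar _ z),
    wirtingerDBar_eval_zzbar, pderiv_inr_gaussExponent]
  simp; ring

end Gaussian

section LadderOperators

variable {n : ℕ}

def polyCreation (j : Fin n) : Module.End ℂ (MvPolynomial (Fin n ⊕ Fin n) ℂ) :=
  (-2 : ℂ) • (pderiv (Sum.inl j)).toLinearMap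
    + (2 * Real.pi : ℂ) • LinearMap.mulLeft ℂ (X (Sum.inr j))

def polyAnnihilation (j : Fin n) : Module.End ℂ (MvPolynomial (Fin n ⊕ Fin n) ℂ) :=
  (2 : ℂ) • (pderiv (Sum.inr j)).toLinearMap

theorem polyCreation_apply (j : Fin n) (p : MvPolynomial (Fin n ⊕ Fin n) ℂ) :
    polyCreation j p
      = C (-2) * pderiv (Sum.inl j) p + C (2 * Real.pi : ℂ) * (X (Sum.inr j) * p) := by
  simp [polyCreation, smul_eq_C_mul]

theorem polyAnnihilation_apply (j : Fin n) (p : MvPolynomial (Fin n ⊕ Fin n) ℂ) :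
    polyAnnihilation j p = C 2 * pderiv (Sum.inr j) p := by
  simp [polyAnnihilation, smul_eq_C_mul]

theorem commute_polyCreation (j k : Fin n) : Commute (polyCreation j) (polyCreation k) := by
  classical
  refine LinearMap.ext fun p => ?_
  simp only [Module.End.mul_apply, polyCreation_apply, map_add, pderiv_C_mul,
    pderiv_pderiv_comm (Sum.inl j) (Sum.inl k)]
  simp [pderiv_X]
  ring

theorem commute_polyAnnihilation_polyCreation {j k : Fin n} (h : j ≠ k) :
    Commute (polyAnnihilation j) (polyCreation k) := by
  classical
  refine LinearMap.ext fun p => ?_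
  simp only [Module.End.mul_apply, polyCreation_apply, polyAnnihilation_apply, map_add,
    pderiv_C_mul, pderiv_pderiv_comm (Sum.inl k) (Sum.inr j)]
  simp [h.symm]
  ring

theorem polyAnnihilation_mul_polyCreation_self (j : Fin n) :
    polyAnnihilation j * polyCreation j
      = polyCreation j * polyAnnihilation j + algebraMap ℂ _ (4 * Real.pi) := by
  refine LinearMap.ext fun p => ?_
  simp only [Module.End.mul_apply, LinearMap.add_apply, Module.algebraMap_end_apply,
    polyCreation_apply, polyAnnihilation_apply, map_add, pderiv_C_mul,
    pderiv_pderiv_comm (Sum.inl j) (Sum.inr j)]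
  simp [smul_eq_C_mul, show (4 * Real.pi : ℂ) = 2 * 2 * Real.pi by ring]
  ring

theorem polyAnnihilation_prod_X_inl_pow (j : Fin n) (β : Fin n → ℕ) :
    polyAnnihilation j (∏ i, X (Sum.inl i) ^ β i) = 0 := by
  rw [polyAnnihilation_apply, mul_eq_zero_of_right]
  exact Finset.prod_induction _ (fun q => pderiv (Sum.inr j) q = 0)
    (fun a b ha hb => by simp [ha, hb]) pderiv_one fun i _ => by simp

def polyNumber (j : Fin n) : Module.End ℂ (MvPolynomial (Fin n ⊕ Fin n) ℂ) :=
  polyCreation j * polyAnnihilation j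

def polyCreationPow (α : Fin n → ℕ) : Module.End ℂ (MvPolynomial (Fin n ⊕ Fin n) ℂ) :=
  (List.ofFn fun k => polyCreation k ^ α k).prod

theorem semiconjBy_polyCreation_polyNumber (j k : Fin n) :
    SemiconjBy (polyCreation k)
      (polyNumber j + algebraMap ℂ _ (if k = j then 4 * Real.pi else 0)) (polyNumber j) := by
  unfold SemiconjBy polyNumber
  split_ifs with hkj
  · subst hkj
    rw [mul_assoc (polyCreation k), polyAnnihilation_mul_polyCreation_self]
  · rw [map_zero, add_zero, ← mul_assoc, (commute_polyCreation k j).eq, mul_assoc, mul_assoc,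
      (commute_polyAnnihilation_polyCreation (Ne.symm hkj)).eq]

theorem semiconjBy_polyCreationPow_polyNumber (α : Fin n → ℕ) (j : Fin n) :
    SemiconjBy (polyCreationPow α) (polyNumber j + algebraMap ℂ _ (4 * Real.pi * α j))
      (polyNumber j) := by
  have h := SemiconjBy.list_ofFn_prod_of_add_algebraMap
    fun k => (semiconjBy_polyCreation_polyNumber j k).pow_of_add_algebraMap (α k)
  have shift : ∑ k, (α k : ℂ) * (if k = j then (4 * Real.pi : ℂ) else 0) = 4 * Real.pi * α j := by
    simp [mul_comm]
  rwa [shift] at h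

theorem polyNumber_polyCreationPow (α : Fin n → ℕ) (j : Fin n)
    (q : MvPolynomial (Fin n ⊕ Fin n) ℂ) (hq : polyAnnihilation j q = 0) :
    polyNumber j (polyCreationPow α q) = (4 * Real.pi * α j : ℂ) • polyCreationPow α q := by
  have hnum : polyNumber j q = 0 := by rw [polyNumber, Module.End.mul_apply, hq, map_zero]
  rw [← Module.End.mul_apply, ← (semiconjBy_polyCreationPow_polyNumber α j).eq,
    Module.End.mul_apply, LinearMap.add_apply, hnum, zero_add, Module.algebraMap_end_apply,
    map_smul]

end LadderOperators

section Intertwining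

variable {n : ℕ}

def polyGauss (p : MvPolynomial (Fin n ⊕ Fin n) ℂ) : (Fin n → ℂ) → ℂ :=
  (fun z => eval (zzbar z) p) * gaussFn

theorem polyGauss_smul (c : ℂ) (p : MvPolynomial (Fin n ⊕ Fin n) ℂ) (z : Fin n → ℂ) :
    polyGauss (c • p) z = c * polyGauss p z := by
  simp [polyGauss, mul_assoc]

theorem bOp_polyGauss (j : Fin n) (p : MvPolynomial (Fin n ⊕ Fin n) ℂ) :
    bOp j (polyGauss p) = polyGauss (polyCreation j p) := by
  ext z
  rw [bOp, polyGauss, wirtingerD_mul j (differentiableAt_eval_zzbar p z)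
    (differentiableAt_gaussFn z), wirtingerD_eval_zzbar, wirtingerD_gaussFn]
  simp [polyGauss, polyCreation_apply]
  ring

theorem bPlusOp_polyGauss (j : Fin n) (p : MvPolynomial (Fin n ⊕ Fin n) ℂ) :
    bPlusOp j (polyGauss p) = polyGauss (polyAnnihilation j p) := by
  ext z
  rw [bPlusOp, polyGauss, wirtingerDBar_mul j (differentiableAt_eval_zzbar p z)
    (differentiableAt_gaussFn z), wirtingerDBar_eval_zzbar, wirtingerDBar_gaussFn]
  simp [polyGauss, polyAnnihilation_apply]
  ring

theorem bPow_polyGauss (α : Fin n → ℕ) (p : MvPolynomial (Fin n ⊕ Fin n) ℂ) :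
    bPow α (polyGauss p) = polyGauss (polyCreationPow α p) :=
  (Function.Semiconj.list_ofFn_pow (fun k p => (bOp_polyGauss k p).symm) α p).symm

theorem eigFun_eq_polyGauss (α β : Fin n → ℕ) :
    eigFun α β = polyGauss (polyCreationPow α (∏ i, X (Sum.inl i) ^ β i)) := by
  rw [eigFun, ← bPow_polyGauss]
  congr 1
  ext z
  simp [polyGauss]

end Intertwining

/-- The functions `f_{α,β} = b^α (z^β exp(-(π/2) Σ |z_i|²))` satisfy
`b_j b_j⁺ f_{α,β} = 4π α_j f_{α,β}`. -/
theorem bj_bjPlus_eigenfunction {n : ℕ} (α β : Fin n → ℕ) (j : Fin n) (z : Fin n → ℂ) :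
    bOp j (bPlusOp j (eigFun α β)) z = 4 * (Real.pi : ℂ) * (α j : ℂ) * eigFun α β z := by
  rw [eigFun_eq_polyGauss, bPlusOp_polyGauss, bOp_polyGauss, ← Module.End.mul_apply,
    ← polyNumber, polyNumber_polyCreationPow α j _ (polyAnnihilation_prod_X_inl_pow j β),
    polyGauss_smul]
end
end

section
/- For every 1 ≤ i ≤ n and all z, z' ∈ ℂ^n, ∫_{ℂ^n} 𝒫(z, w) · w̄_i · 𝒫(w, z') dW = z̄'_i · 𝒫(z, z'). -/
open MeasureTheory Complex

noncomputable section

/-!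
The integrand factors over the coordinates,
`𝒫(z, w) 𝒫(w, z') = 𝒫(z, z') ∏ⱼ exp (-π (wⱼ - zⱼ) (w̄ⱼ - z̄'ⱼ))`.
Writing `w = x + i y`, a factor `exp (-π (w - u) (w̄ - v̄))` equals `exp (-π (x - m)²) exp (-π (y - d)²)`
with the complex centres `m = (u + v̄) / 2` and `d = -i (u - v̄) / 2`. A Gaussian `exp (-b (x - c)²)` with complex centre `c`
has mass `(π / b)^{1/2}`, and its first moment is `c` times that mass because `(x - c) exp (-b (x - c)²)`
is a derivative of an integrable function. So every factor has mass `1`, and the one carrying `w̄ᵢ`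
has mean `m - i d = z̄'ᵢ`.
-/

open Real ComplexConjugate

section ComplexCentre

variable {b : ℂ}

lemma integrable_cexp_neg_mul_sub_sq (hb : 0 < b.re) (c : ℂ) :
    Integrable fun x : ℝ => cexp (-b * (x - c) ^ 2) := by
  convert integrable_cexp_quadratic hb (2 * b * c) (-b * c ^ 2) using 3 with x
  ring

lemma integral_cexp_neg_mul_sub_sq (hb : 0 < b.re) (c : ℂ) :
    ∫ x : ℝ, cexp (-b * (x - c) ^ 2) = (π / b) ^ (1 / 2 : ℂ) := by
  have hb₀ : b ≠ 0 := by rintro rfl; simp at hb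
  have hexp : -b * c ^ 2 - (2 * b * c) ^ 2 / (4 * -b) = 0 := by field_simp; ring
  calc ∫ x : ℝ, cexp (-b * (x - c) ^ 2)
      = ∫ x : ℝ, cexp (-b * x ^ 2 + 2 * b * c * x + -b * c ^ 2) := by
        congr with x; ring_nf
    _ = (π / b) ^ (1 / 2 : ℂ) := by
        rw [integral_cexp_quadratic (by simpa using hb), neg_neg, hexp, Complex.exp_zero, mul_one]

lemma integrable_ofReal_mul_cexp_neg_mul_sub_sq (hb : 0 < b.re) (c : ℂ) :
    Integrable fun x : ℝ => (x : ℂ) * cexp (-b * (x - c) ^ 2) := by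
  have hsplit (x : ℝ) : (x : ℂ) * cexp (-b * (x - c) ^ 2) =
      cexp (-(b / 2) * x ^ 2 + 2 * b * c * x - b * c ^ 2) * ((x : ℂ) * cexp (-(b / 2) * x ^ 2)) := by
    rw [mul_left_comm, ← Complex.exp_add]; ring_nf
  simp_rw [hsplit]
  refine (integrable_mul_cexp_neg_mul_sq (by simpa using hb)).bdd_mul
    (c := rexp ((2 * b * c).re ^ 2 / (2 * b.re) - (b * c ^ 2).re)) (by fun_prop)
    (Filter.Eventually.of_forall fun x => ?_)
  rw [Complex.norm_exp, Real.exp_le_exp]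
  simp only [← Complex.ofReal_pow, Complex.sub_re, Complex.add_re, Complex.re_mul_ofReal,
    Complex.neg_re, Complex.div_ofNat_re]
  have hsq : (2 * b * c).re ^ 2 / (2 * b.re) - (-(b.re / 2) * x ^ 2 + (2 * b * c).re * x) =
      (b.re * x - (2 * b * c).re) ^ 2 / (2 * b.re) := by
    field_simp; ring
  have : 0 ≤ (b.re * x - (2 * b * c).re) ^ 2 / (2 * b.re) := by positivity
  linarith

lemma integral_ofReal_mul_cexp_neg_mul_sub_sq (hb : 0 < b.re) (c : ℂ) :
    ∫ x : ℝ, (x : ℂ) * cexp (-b * (x - c) ^ 2) = c * (π / b) ^ (1 / 2 : ℂ) := by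
  have hb₀ : b ≠ 0 := by rintro rfl; simp at hb
  have hderiv (x : ℝ) : HasDerivAt (fun x : ℝ => -(2 * b)⁻¹ * cexp (-b * (x - c) ^ 2))
      ((x - c) * cexp (-b * (x - c) ^ 2)) x := by
    have := ((((hasDerivAt_id (x : ℂ)).sub_const c).fun_pow 2).const_mul (-b)).cexp.const_mul
      (-(2 * b)⁻¹)
    simp only [id_eq] at this
    convert this.comp_ofReal using 1
    field_simp; ring
  have hint := integrable_cexp_neg_mul_sub_sq hb c
  have hint₁ := integrable_ofReal_mul_cexp_neg_mul_sub_sq hb c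
  have hcentred : ∫ x : ℝ, ((x : ℂ) - c) * cexp (-b * (x - c) ^ 2) = 0 := by
    simp_rw [sub_mul] at hderiv ⊢
    exact integral_eq_zero_of_hasDerivAt_of_integrable hderiv (hint₁.sub (hint.const_mul c))
      (hint.const_mul _)
  simp_rw [sub_mul] at hcentred
  rwa [integral_sub hint₁ (hint.const_mul c), integral_const_mul, integral_cexp_neg_mul_sub_sq hb,
    sub_eq_zero] at hcentred

end ComplexCentre

section ReIm

variable {𝕜 : Type*} [RCLike 𝕜]

lemma Complex.integral_re_mul_im (f g : ℝ → 𝕜) :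
    ∫ w : ℂ, f w.re * g w.im = (∫ x, f x) * ∫ y, g y := by
  rw [← integral_prod_mul, ← Measure.volume_eq_prod,
    ← Complex.volume_preserving_equiv_real_prod.integral_comp']
  rfl

lemma Complex.integrable_re_mul_im {f g : ℝ → 𝕜} (hf : Integrable f) (hg : Integrable g) :
    Integrable fun w : ℂ => f w.re * g w.im := by
  have := hf.mul_prod hg
  rwa [← Measure.volume_eq_prod, ← Complex.volume_preserving_equiv_real_prod.integrable_comp_emb
    Complex.measurableEquivRealProd.measurableEmbedding] at this

end ReIm

/-- For `u = v` this is the Gaussian `exp (-π |w - u|²)`. -/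
def shiftedGaussian (u v w : ℂ) : ℂ :=
  cexp (-π * ((w - u) * conj (w - v)))

lemma shiftedGaussian_eq_mul (u v w : ℂ) :
    shiftedGaussian u v w = cexp (-π * (w.re - (u + conj v) / 2) ^ 2)
      * cexp (-π * (w.im - (-I * ((u - conj v) / 2))) ^ 2) := by
  rw [shiftedGaussian, ← Complex.exp_add]
  congr 1
  conv_lhs => rw [← Complex.re_add_im w]
  simp only [map_sub, map_add, map_mul, Complex.conj_ofReal, Complex.conj_I]
  linear_combination (π * ((u - conj v) ^ 2 / 4 + w.im ^ 2) : ℂ) * Complex.I_sq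

lemma integral_shiftedGaussian (u v : ℂ) : ∫ w : ℂ, shiftedGaussian u v w = 1 := by
  have hπ : 0 < (π : ℂ).re := by simpa using pi_pos
  simp_rw [shiftedGaussian_eq_mul]
  rw [Complex.integral_re_mul_im (fun x => cexp (-π * (x - (u + conj v) / 2) ^ 2))
    (fun y => cexp (-π * (y - (-I * ((u - conj v) / 2))) ^ 2)),
    integral_cexp_neg_mul_sub_sq hπ, integral_cexp_neg_mul_sub_sq hπ,
    div_self (by exact_mod_cast pi_ne_zero), one_cpow, one_mul]

lemma integral_conj_mul_shiftedGaussian (u v : ℂ) :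
    ∫ w : ℂ, conj w * shiftedGaussian u v w = conj v := by
  have hπ : 0 < (π : ℂ).re := by simpa using pi_pos
  set m := (u + conj v) / 2
  set d := -I * ((u - conj v) / 2)
  set F : ℝ → ℂ := fun x => cexp (-π * (x - m) ^ 2)
  set G : ℝ → ℂ := fun y => cexp (-π * (y - d) ^ 2)
  have hsplit (w : ℂ) : conj w * shiftedGaussian u v w
      = (w.re * F w.re) * G w.im - I * (F w.re * (w.im * G w.im)) := by
    have hconj : conj w = w.re - w.im * I := by apply Complex.ext <;> simp
    rw [hconj, shiftedGaussian_eq_mul]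
    ring
  simp_rw [hsplit]
  rw [integral_sub, integral_const_mul, Complex.integral_re_mul_im (fun x => x * F x) G,
    Complex.integral_re_mul_im F (fun y => y * G y)]
  · simp only [F, G]
    rw [integral_cexp_neg_mul_sub_sq hπ, integral_cexp_neg_mul_sub_sq hπ,
      integral_ofReal_mul_cexp_neg_mul_sub_sq hπ, integral_ofReal_mul_cexp_neg_mul_sub_sq hπ,
      div_self (by exact_mod_cast pi_ne_zero), one_cpow]
    simp only [m, d]
    linear_combination (u - conj v) / 2 * Complex.I_sq
  · exact Complex.integrable_re_mul_im (integrable_ofReal_mul_cexp_neg_mul_sub_sq hπ m)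
      (integrable_cexp_neg_mul_sub_sq hπ d)
  · exact (Complex.integrable_re_mul_im (integrable_cexp_neg_mul_sub_sq hπ m)
      (integrable_ofReal_mul_cexp_neg_mul_sub_sq hπ d)).const_mul I

lemma bergK_mul_bergK {n : ℕ} (z w z' : Fin n → ℂ) :
    bergK z w * bergK w z' = bergK z z' * ∏ j, shiftedGaussian (z j) (z' j) (w j) := by
  simp only [bergK, shiftedGaussian, ← Complex.exp_sum, ← Complex.exp_add]
  congr 1
  simp only [Finset.mul_sum, ← Finset.sum_add_distrib]
  refine Finset.sum_congr rfl fun j _ => ?_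
  simp only [← Complex.mul_conj, map_sub]
  ring

/-- `∫ 𝒫(z, w) w̄_i 𝒫(w, z') dW = z̄'_i 𝒫(z, z')`. -/
theorem bergK_reproduces_conj_coord {n : ℕ} (i : Fin n) (z z' : Fin n → ℂ) :
    (∫ w : Fin n → ℂ, bergK z w * (starRingEnd ℂ) (w i) * bergK w z')
      = (starRingEnd ℂ) (z' i) * bergK z z' := by
  set g : Fin n → ℂ → ℂ := fun j w =>
    (if j = i then conj w else 1) * shiftedGaussian (z j) (z' j) w
  have hfactor (w : Fin n → ℂ) :
      bergK z w * conj (w i) * bergK w z' = bergK z z' * ∏ j, g j (w j) := by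
    simp only [g, Finset.prod_mul_distrib, Finset.prod_ite_eq', Finset.mem_univ, if_true]
    rw [mul_right_comm, bergK_mul_bergK]
    ring
  have hg (j : Fin n) : ∫ w, g j w = if j = i then conj (z' j) else 1 := by
    split_ifs with hj
    · simp only [g, hj, if_true, integral_conj_mul_shiftedGaussian]
    · simp only [g, hj, if_false, one_mul, integral_shiftedGaussian]
  simp_rw [hfactor]
  rw [integral_const_mul, integral_fintype_prod_volume_eq_prod g]
  simp only [hg, Finset.prod_ite_eq', Finset.mem_univ, if_true]
  ring
end
end

section
/- The kernel calculus is associative: let F, G, H : ℂ^n × ℂ^n → ℂ be polynomial functions in the underlying real coordinates, and suppose K₁, K₂, K₃, K₄ are polynomial functions of the same type satisfying, for all z, z' ∈ ℂ^n: ∫ F(z,w)𝒫(z,w)G(w,z')𝒫(w,z') dW = K₁(z,z')𝒫(z,z'), ∫ G(z,w)𝒫(z,w)H(w,z')𝒫(w,z') dW = K₂(z,z')𝒫(z,z'), ∫ K₁(z,w)𝒫(z,w)H(w,z')𝒫(w,z') dW = K₃(z,z')𝒫(z,z'), and ∫ F(z,w)𝒫(z,w)K₂(w,z')𝒫(w,z')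 dW = K₄(z,z')𝒫(z,z'). Then K₃ = K₄. -/
open MeasureTheory Complex

noncomputable section

/-! Substituting the identities for `K₁` and `K₂`, both `K₃ z z' 𝒫(z,z')` and `K₄ z z' 𝒫(z,z')`
become iterated integrals, in opposite orders, of one function of `(w, u)`; so the theorem is
Fubini once that function is integrable on `ℂⁿ × ℂⁿ`. This holds because polynomials grow slower
than any Gaussian: the integrand is bounded by `C (1 + ‖u‖)ᵏ |𝒫(z,u)| · (1 + ‖w‖)ᵏ |𝒫(w,z')|`,
using `|𝒫(u,w)| ≤ 1` for the middle factor, and `|𝒫(a,u)| = exp(-(π/2) |a - u|²)`. -/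

lemma MvPolynomial.norm_eval_le {σ : Type*} (p : MvPolynomial σ ℂ) {v : σ → ℂ} {B : ℝ}
    (hB : 1 ≤ B) (hv : ∀ i, ‖v i‖ ≤ B) :
    ‖MvPolynomial.eval v p‖ ≤ (∑ m ∈ p.support, ‖MvPolynomial.coeff m p‖) * B ^ p.totalDegree := by
  rw [MvPolynomial.eval_eq, Finset.sum_mul]
  refine (norm_sum_le _ _).trans (Finset.sum_le_sum fun m hm => ?_)
  rw [norm_mul, norm_prod]
  gcongr
  calc ∏ i ∈ m.support, ‖v i ^ m i‖ ≤ ∏ i ∈ m.support, B ^ m i :=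
        Finset.prod_le_prod (fun _ _ => norm_nonneg _)
          fun i _ => by rw [norm_pow]; exact pow_le_pow_left₀ (norm_nonneg _) (hv i) _
    _ = B ^ (∑ i ∈ m.support, m i) := Finset.prod_pow_eq_pow_sum _ _ _
    _ ≤ B ^ p.totalDegree := pow_le_pow_right₀ hB (MvPolynomial.le_totalDegree hm)

namespace IsPolyKernel

variable {n : ℕ} {F : (Fin n → ℂ) → (Fin n → ℂ) → ℂ}

lemma exists_norm_le (hF : IsPolyKernel F) :
    ∃ C : ℝ, 0 ≤ C ∧ ∃ d : ℕ, ∀ z w : Fin n → ℂ,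
      ‖F z w‖ ≤ C * ((1 + ‖z‖) ^ d * (1 + ‖w‖) ^ d) := by
  obtain ⟨p, hp⟩ := hF
  refine ⟨∑ m ∈ p.support, ‖MvPolynomial.coeff m p‖, by positivity, p.totalDegree,
    fun z w => ?_⟩
  have hz := norm_nonneg z
  have hw := norm_nonneg w
  rw [hp, ← mul_pow]
  refine p.norm_eval_le (by nlinarith) ?_
  rintro (i | i | i | i) <;>
    simp only [Sum.elim_inl, Sum.elim_inr, Complex.norm_conj] <;>
    nlinarith [norm_le_pi_norm z i, norm_le_pi_norm w i]

lemma continuous (hF : IsPolyKernel F) :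
    Continuous fun q : (Fin n → ℂ) × (Fin n → ℂ) => F q.1 q.2 := by
  obtain ⟨p, hp⟩ := hF
  simp only [hp]
  refine (MvPolynomial.continuous_eval p).comp (continuous_pi ?_)
  rintro (i | i | i | i) <;> simp only [Sum.elim_inl, Sum.elim_inr] <;> fun_prop

end IsPolyKernel

lemma one_add_pow_le_mul_exp_sq {ε : ℝ} (hε : 0 < ε) (k : ℕ) :
    ∃ M : ℝ, ∀ t : ℝ, 0 ≤ t → (1 + t) ^ k ≤ M * Real.exp (ε * t ^ 2) := by
  set δ := ε / (k + 1) with hδ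
  have hδ0 : 0 < δ := by positivity
  refine ⟨(1 + δ⁻¹) ^ k, fun t ht => ?_⟩
  have hle : t ≤ δ * t ^ 2 + δ⁻¹ := by
    have hsq : δ * t ^ 2 + δ⁻¹ - t = δ⁻¹ * ((δ * t - 1 / 2) ^ 2 + 3 / 4) := by
      field_simp; ring
    linarith [show 0 ≤ δ⁻¹ * ((δ * t - 1 / 2) ^ 2 + 3 / 4) by positivity]
  have hlin : 1 + t ≤ (1 + δ⁻¹) * (1 + δ * t ^ 2) := by
    have hexpand : (1 + δ⁻¹) * (1 + δ * t ^ 2) = 1 + δ * t ^ 2 + δ⁻¹ + t ^ 2 := by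
      field_simp; ring
    rw [hexpand]
    linarith [sq_nonneg t]
  have hkδ : k * δ ≤ ε := by
    rw [hδ, mul_div_assoc']
    exact div_le_of_le_mul₀ (by positivity) hε.le (by nlinarith)
  calc (1 + t) ^ k ≤ ((1 + δ⁻¹) * (1 + δ * t ^ 2)) ^ k := pow_le_pow_left₀ (by linarith) hlin k
    _ ≤ (1 + δ⁻¹) ^ k * Real.exp (δ * t ^ 2) ^ k := by
        rw [mul_pow]
        gcongr
        linarith [Real.add_one_le_exp (δ * t ^ 2)]
    _ ≤ (1 + δ⁻¹) ^ k * Real.exp (ε * t ^ 2) := by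
        rw [← Real.exp_nat_mul, ← mul_assoc]
        gcongr

lemma sq_norm_le_sum_normSq {ι : Type*} [Fintype ι] (x : ι → ℂ) :
    ‖x‖ ^ 2 ≤ ∑ j, Complex.normSq (x j) := by
  have hQ : 0 ≤ ∑ j, Complex.normSq (x j) := Finset.sum_nonneg fun j _ => Complex.normSq_nonneg _
  have h : ‖x‖ ≤ √(∑ j, Complex.normSq (x j)) := by
    refine (pi_norm_le_iff_of_nonneg (Real.sqrt_nonneg _)).2 fun j => ?_
    rw [Complex.norm_def]
    exact Real.sqrt_le_sqrt (Finset.single_le_sum (fun j _ => Complex.normSq_nonneg (x j))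
      (Finset.mem_univ j))
  simpa [Real.sq_sqrt hQ] using pow_le_pow_left₀ (norm_nonneg _) h 2

lemma exists_one_add_norm_pow_le_mul_exp {n : ℕ} {ε : ℝ} (hε : 0 < ε) (k : ℕ)
    (a : Fin n → ℂ) :
    ∃ C : ℝ, ∀ u : Fin n → ℂ,
      (1 + ‖u‖) ^ k ≤ C * Real.exp (ε * ∑ j, Complex.normSq (a j - u j)) := by
  obtain ⟨M, hM⟩ := one_add_pow_le_mul_exp_sq hε k
  refine ⟨(1 + ‖a‖) ^ k * M, fun u => ?_⟩
  have hdist : 1 + ‖u‖ ≤ (1 + ‖a‖) * (1 + ‖a - u‖) := by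
    nlinarith [norm_sub_norm_le u a, norm_sub_rev u a, norm_nonneg a, norm_nonneg (a - u)]
  calc (1 + ‖u‖) ^ k ≤ (1 + ‖a‖) ^ k * (1 + ‖a - u‖) ^ k := by
        rw [← mul_pow]; exact pow_le_pow_left₀ (by positivity) hdist k
    _ ≤ (1 + ‖a‖) ^ k * (M * Real.exp (ε * ‖a - u‖ ^ 2)) := by
        gcongr; exact hM _ (norm_nonneg _)
    _ ≤ (1 + ‖a‖) ^ k * M * Real.exp (ε * ∑ j, Complex.normSq (a j - u j)) := by
        have hM0 : 0 ≤ M := zero_le_one.trans (by simpa using hM 0 le_rfl)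
        rw [mul_assoc]
        gcongr
        exact sq_norm_le_sum_normSq (a - u)

lemma integrable_exp_neg_mul_sum_normSq_sub {n : ℕ} {c : ℝ} (hc : 0 < c) (a : Fin n → ℂ) :
    Integrable fun u : Fin n → ℂ => Real.exp (-c * ∑ j, Complex.normSq (a j - u j)) := by
  have hgauss : Integrable fun w : ℂ => Real.exp (-c * Complex.normSq w) := by
    refine (GaussianFourier.integrable_cexp_neg_mul_sq_norm_add (b := (c : ℂ)) (by simpa using hc)
      0 (0 : ℂ)).norm.congr (Filter.Eventually.of_forall fun w => ?_)
    simp [Complex.norm_exp, Complex.normSq_eq_norm_sq, ← Complex.ofReal_pow]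
  simp only [Finset.mul_sum, Real.exp_sum]
  exact Integrable.fintype_prod fun j => hgauss.comp_sub_left (a j)

lemma norm_bergK {n : ℕ} (a b : Fin n → ℂ) :
    ‖bergK a b‖ = Real.exp (-(Real.pi / 2) * ∑ j, Complex.normSq (a j - b j)) := by
  rw [bergK, Complex.norm_exp,
    show -((Real.pi : ℂ) / 2) = ((-(Real.pi / 2) : ℝ) : ℂ) by push_cast; ring,
    Complex.re_ofReal_mul, Complex.re_sum]
  congr 2
  refine Finset.sum_congr rfl fun j _ => ?_
  simp [Complex.normSq_sub, Complex.mul_re]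
  ring

lemma bergK_ne_zero {n : ℕ} (a b : Fin n → ℂ) : bergK a b ≠ 0 :=
  Complex.exp_ne_zero _

lemma norm_bergK_comm {n : ℕ} (a b : Fin n → ℂ) : ‖bergK a b‖ = ‖bergK b a‖ := by
  simp only [norm_bergK, ← Complex.normSq_neg (a _ - b _), neg_sub]

lemma norm_bergK_le_one {n : ℕ} (a b : Fin n → ℂ) : ‖bergK a b‖ ≤ 1 := by
  rw [norm_bergK, Real.exp_le_one_iff]
  have := Finset.sum_nonneg fun j (_ : j ∈ Finset.univ) => Complex.normSq_nonneg (a j - b j)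
  nlinarith [Real.pi_pos]

@[fun_prop]
lemma Continuous.bergK {n : ℕ} {X : Type*} [TopologicalSpace X] {f g : X → Fin n → ℂ}
    (hf : Continuous f) (hg : Continuous g) : Continuous fun x => bergK (f x) (g x) := by
  unfold _root_.bergK
  fun_prop

lemma integrable_one_add_norm_pow_mul_norm_bergK {n : ℕ} (k : ℕ) (a : Fin n → ℂ) :
    Integrable fun u : Fin n → ℂ => (1 + ‖u‖) ^ k * ‖bergK a u‖ := by
  obtain ⟨C, hC⟩ := exists_one_add_norm_pow_le_mul_exp (by positivity : 0 < Real.pi / 4) k a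
  refine ((integrable_exp_neg_mul_sum_normSq_sub (by positivity : 0 < Real.pi / 4) a).const_mul
    C).mono' (by fun_prop : Continuous _).aestronglyMeasurable
    (Filter.Eventually.of_forall fun u => ?_)
  set Q := ∑ j, Complex.normSq (a j - u j)
  have hu : 0 ≤ 1 + ‖u‖ := by positivity
  calc ‖(1 + ‖u‖) ^ k * ‖bergK a u‖‖ = (1 + ‖u‖) ^ k * Real.exp (-(Real.pi / 2) * Q) := by
        rw [norm_mul, norm_norm, norm_bergK, norm_pow, Real.norm_of_nonneg hu]
    _ ≤ C * Real.exp (Real.pi / 4 * Q) * Real.exp (-(Real.pi / 2) * Q) := by gcongr; exact hC u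
    _ = C * Real.exp (-(Real.pi / 4) * Q) := by rw [mul_assoc, ← Real.exp_add]; ring_nf

lemma integrable_kernel_composition {n : ℕ} {F G H : (Fin n → ℂ) → (Fin n → ℂ) → ℂ}
    (hF : IsPolyKernel F) (hG : IsPolyKernel G) (hH : IsPolyKernel H) (z z' : Fin n → ℂ) :
    Integrable (Function.uncurry fun w u : Fin n → ℂ =>
      F z u * bergK z u * G u w * bergK u w * (H w z' * bergK w z'))
      ((volume : Measure (Fin n → ℂ)).prod volume) := by
  obtain ⟨CF, hCF, dF, hFb⟩ := hF.exists_norm_le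
  obtain ⟨CG, hCG, dG, hGb⟩ := hG.exists_norm_le
  obtain ⟨CH, hCH, dH, hHb⟩ := hH.exists_norm_le
  set c := CF * (1 + ‖z‖) ^ dF * CG * CH * (1 + ‖z'‖) ^ dH
  have hw : Integrable fun w : Fin n → ℂ => c * ((1 + ‖w‖) ^ (dG + dH) * ‖bergK w z'‖) :=
    ((integrable_one_add_norm_pow_mul_norm_bergK _ z').congr
      (Filter.Eventually.of_forall fun w => by rw [norm_bergK_comm])).const_mul c
  have hu := integrable_one_add_norm_pow_mul_norm_bergK (dF + dG) z
  have hFc := hF.continuous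
  have hGc := hG.continuous
  have hHc := hH.continuous
  refine (hw.mul_prod hu).mono' (by fun_prop : Continuous _).aestronglyMeasurable
    (Filter.Eventually.of_forall fun ⟨w, u⟩ => ?_)
  calc ‖F z u * bergK z u * G u w * bergK u w * (H w z' * bergK w z')‖
      = ‖F z u‖ * ‖bergK z u‖ * ‖G u w‖ * ‖bergK u w‖ * (‖H w z'‖ * ‖bergK w z'‖) := by
        simp only [norm_mul]
    _ ≤ CF * ((1 + ‖z‖) ^ dF * (1 + ‖u‖) ^ dF) * ‖bergK z u‖
          * (CG * ((1 + ‖u‖) ^ dG * (1 + ‖w‖) ^ dG)) * 1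
          * (CH * ((1 + ‖w‖) ^ dH * (1 + ‖z'‖) ^ dH) * ‖bergK w z'‖) := by
        gcongr
        exacts [hFb z u, hGb u w, norm_bergK_le_one u w, hHb w z']
    _ = c * ((1 + ‖w‖) ^ (dG + dH) * ‖bergK w z'‖) * ((1 + ‖u‖) ^ (dF + dG) * ‖bergK z u‖) := by
        ring

theorem kernel_calculus_assoc_general {n : ℕ} (F G H K₁ K₂ K₃ K₄ : (Fin n → ℂ) → (Fin n → ℂ) → ℂ)
    (hF : IsPolyKernel F) (hG : IsPolyKernel G) (hH : IsPolyKernel H)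
    (h₁ : ∀ z z' : Fin n → ℂ,
      (∫ w : Fin n → ℂ, F z w * bergK z w * G w z' * bergK w z') = K₁ z z' * bergK z z')
    (h₂ : ∀ z z' : Fin n → ℂ,
      (∫ w : Fin n → ℂ, G z w * bergK z w * H w z' * bergK w z') = K₂ z z' * bergK z z')
    (h₃ : ∀ z z' : Fin n → ℂ,
      (∫ w : Fin n → ℂ, K₁ z w * bergK z w * H w z' * bergK w z') = K₃ z z' * bergK z z')
    (h₄ : ∀ z z' : Fin n → ℂ,
      (∫ w : Fin n → ℂ, F z w * bergK z w * K₂ w z' * bergK w z') = K₄ z z' * bergK z z') :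
    K₃ = K₄ := by
  funext z z'
  refine mul_right_cancel₀ (bergK_ne_zero z z') ?_
  rw [← h₃, ← h₄]
  calc (∫ w, K₁ z w * bergK z w * H w z' * bergK w z')
      = ∫ w, ∫ u, F z u * bergK z u * G u w * bergK u w * (H w z' * bergK w z') := by
        congr 1 with w
        rw [mul_assoc (K₁ z w * _), ← h₁, ← integral_mul_const]
    _ = ∫ u, ∫ w, F z u * bergK z u * G u w * bergK u w * (H w z' * bergK w z') :=
        integral_integral_swap (integrable_kernel_composition hF hG hH z z')
    _ = ∫ u, F z u * bergK z u * K₂ u z' * bergK u z' := by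
        congr 1 with u
        simp only [mul_assoc, integral_const_mul, ← h₂]

/-- The kernel calculus is associative: `𝒦[𝒦[F,G],H] = 𝒦[F,𝒦[G,H]]`. -/
theorem kernel_calculus_assoc {n : ℕ} (F G H K₁ K₂ K₃ K₄ : (Fin n → ℂ) → (Fin n → ℂ) → ℂ)
    (hF : IsPolyKernel F) (hG : IsPolyKernel G) (hH : IsPolyKernel H)
    (hK₁ : IsPolyKernel K₁) (hK₂ : IsPolyKernel K₂)
    (hK₃ : IsPolyKernel K₃) (hK₄ : IsPolyKernel K₄)
    (h₁ : ∀ z z' : Fin n → ℂ,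
      (∫ w : Fin n → ℂ, F z w * bergK z w * G w z' * bergK w z') = K₁ z z' * bergK z z')
    (h₂ : ∀ z z' : Fin n → ℂ,
      (∫ w : Fin n → ℂ, G z w * bergK z w * H w z' * bergK w z') = K₂ z z' * bergK z z')
    (h₃ : ∀ z z' : Fin n → ℂ,
      (∫ w : Fin n → ℂ, K₁ z w * bergK z w * H w z' * bergK w z') = K₃ z z' * bergK z z')
    (h₄ : ∀ z z' : Fin n → ℂ,
      (∫ w : Fin n → ℂ, F z w * bergK z w * K₂ w z' * bergK w z') = K₄ z z' * bergK z z') :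
    K₃ = K₄ :=
  kernel_calculus_assoc_general F G H K₁ K₂ K₃ K₄ hF hG hH h₁ h₂ h₃ h₄
end
end

section
/- Let f : ℝ^{2n} → ℂ be a smooth function. Then for all z, z' ∈ ℂ^n, ∫_{ℂ^n} 𝒫(z, w) · (Σ_{j=1}^{2n} (∂f/∂Z_j)(0) · W_j) · 𝒫(w, z') dW = Σ_{i=1}^n ((∂f/∂z_i)(0) · z_i + (∂f/∂z̄_i)(0) · z̄'_i) · 𝒫(z, z'), where W_j denotes the j-th real coordinate of w under the identification ℂ^n ≅ ℝ^{2n}. -/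
open MeasureTheory Complex

noncomputable section

namespace BKAux
open Real Filter


lemma pi_re_pos : 0 < ((Real.pi : ℂ)).re := by simpa using Real.pi_pos

/-- Integrability of the 1D gaussian with complex linear term. -/
lemma rint (c : ℂ) : Integrable (fun x : ℝ => cexp (-(Real.pi:ℂ) * x ^ 2 + c * x)) := by
  simpa using integrable_cexp_quadratic pi_re_pos c 0

/-- Value of the 1D gaussian integral. -/
lemma rval (c : ℂ) : ∫ x : ℝ, cexp (-(Real.pi:ℂ) * x ^ 2 + c * x)
    = cexp (c ^ 2 / (4 * (Real.pi:ℂ))) := by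
  have hb : (-(Real.pi:ℂ)).re < 0 := by simpa using Real.pi_pos
  have := integral_cexp_quadratic hb c 0
  simp only [add_zero, zero_sub] at this
  rw [this]
  rw [neg_neg, div_self (by exact_mod_cast Real.pi_ne_zero), one_cpow, one_mul]
  congr 1
  rw [mul_neg, div_neg, neg_neg]



lemma rmint (c : ℂ) :
    Integrable (fun x : ℝ => (x:ℂ) * cexp (-(Real.pi:ℂ) * x ^ 2 + c * x)) := by
  have hmaj : Integrable (fun x : ℝ =>
      ‖cexp (((1:ℂ) - Real.pi) * x ^ 2 + (c.re:ℂ) * x)‖) := by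
    have hre : ((1:ℂ) - Real.pi).re < 0 := by
      simp only [Complex.sub_re, Complex.one_re, Complex.ofReal_re]
      linarith [Real.pi_gt_three]
    refine ((integrable_cexp_quadratic' hre (c.re:ℂ) 0).norm).congr ?_
    filter_upwards with x; simp
  refine hmaj.mono' ?_ ?_
  · apply Continuous.aestronglyMeasurable
    fun_prop
  · filter_upwards with x
    rw [norm_mul, Complex.norm_exp, Complex.norm_exp]
    have h1 : (-(Real.pi:ℂ) * x ^ 2 + c * x).re = -Real.pi * x ^ 2 + c.re * x := by
      have : ((x:ℂ)) ^ 2 = ((x ^ 2 : ℝ) : ℂ) := by push_cast; ring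
      rw [this]; simp [Complex.add_re, Complex.mul_re]
      exact (show ((x:ℂ) ^ 2).re = x ^ 2 by rw [this, Complex.ofReal_re])
    have h2 : (((1:ℂ) - Real.pi) * x ^ 2 + (c.re:ℂ) * x).re = (1 - Real.pi) * x ^ 2 + c.re * x := by
      have : ((x:ℂ)) ^ 2 = ((x ^ 2 : ℝ) : ℂ) := by push_cast; ring
      rw [this]; simp [Complex.add_re, Complex.mul_re, Complex.sub_re]
      exact Or.inl (show ((x:ℂ) ^ 2).re = x ^ 2 by rw [this, Complex.ofReal_re])
    rw [h1, h2]
    have hx : ‖(x:ℂ)‖ ≤ Real.exp (x ^ 2) := by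
      rw [Complex.norm_real, Real.norm_eq_abs]
      nlinarith [Real.add_one_le_exp (x ^ 2), sq_nonneg (|x| - 1), _root_.sq_abs x, abs_nonneg x,
        Real.exp_pos (x ^ 2)]
    calc ‖(x:ℂ)‖ * Real.exp (-Real.pi * x ^ 2 + c.re * x)
        ≤ Real.exp (x ^ 2) * Real.exp (-Real.pi * x ^ 2 + c.re * x) := by
          exact mul_le_mul_of_nonneg_right hx (Real.exp_pos _).le
      _ = Real.exp ((1 - Real.pi) * x ^ 2 + c.re * x) := by
          rw [← Real.exp_add]; ring_nf


lemma expo_re (c : ℂ) (x : ℝ) :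
    (-(Real.pi:ℂ) * x ^ 2 + c * x).re = -Real.pi * x ^ 2 + c.re * x := by
  have : ((x:ℂ)) ^ 2 = ((x ^ 2 : ℝ) : ℂ) := by push_cast; ring
  rw [this]; simp [Complex.add_re, Complex.mul_re]
  exact (show ((x:ℂ) ^ 2).re = x ^ 2 by rw [this, Complex.ofReal_re])

lemma key_tendsto_atTop (c : ℂ) :
    Tendsto (fun x : ℝ => -Real.pi * x ^ 2 + c.re * x) atTop atBot := by
  set r := c.re / (2 * Real.pi) with hr
  have t1 : Tendsto (fun x : ℝ => x + -r) atTop atTop :=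
    tendsto_atTop_add_const_right _ _ tendsto_id
  have t2 : Tendsto (fun x : ℝ => (x + -r) ^ 2) atTop atTop :=
    (tendsto_pow_atTop two_ne_zero).comp t1
  have t3 : Tendsto (fun x : ℝ => Real.pi * (x + -r) ^ 2) atTop atTop :=
    t2.const_mul_atTop Real.pi_pos
  have t4 : Tendsto (fun x : ℝ => -(Real.pi * (x + -r) ^ 2) + c.re ^ 2 / (4 * Real.pi)) atTop atBot :=
    tendsto_atBot_add_const_right _ _ (tendsto_neg_atBot_iff.mpr t3)
  refine t4.congr fun x => ?_
  have hπ := Real.pi_ne_zero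
  rw [hr]
  field_simp
  ring

lemma key_tendsto_atBot (c : ℂ) :
    Tendsto (fun x : ℝ => -Real.pi * x ^ 2 + c.re * x) atBot atBot := by
  set r := c.re / (2 * Real.pi) with hr
  have t1 : Tendsto (fun x : ℝ => x + -r) atBot atBot :=
    tendsto_atBot_add_const_right _ _ tendsto_id
  have t1' : Tendsto (fun x : ℝ => -(x + -r)) atBot atTop :=
    tendsto_neg_atBot_atTop.comp t1
  have t2 : Tendsto (fun x : ℝ => (x + -r) ^ 2) atBot atTop := by
    have := (tendsto_pow_atTop two_ne_zero).comp t1'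
    refine this.congr fun x => ?_
    simp only [Function.comp]; ring
  have t3 : Tendsto (fun x : ℝ => Real.pi * (x + -r) ^ 2) atBot atTop :=
    t2.const_mul_atTop Real.pi_pos
  have t4 : Tendsto (fun x : ℝ => -(Real.pi * (x + -r) ^ 2) + c.re ^ 2 / (4 * Real.pi)) atBot atBot :=
    tendsto_atBot_add_const_right _ _ (tendsto_neg_atBot_iff.mpr t3)
  refine t4.congr fun x => ?_
  have hπ := Real.pi_ne_zero
  rw [hr]
  field_simp
  ring

lemma g_tendsto_zero (c : ℂ) (l : Filter ℝ)
    (h : Tendsto (fun x : ℝ => -Real.pi * x ^ 2 + c.re * x) l atBot) :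
    Tendsto (fun x : ℝ => cexp (-(Real.pi:ℂ) * x ^ 2 + c * x)) l (nhds 0) := by
  rw [tendsto_zero_iff_norm_tendsto_zero]
  have : (fun x : ℝ => ‖cexp (-(Real.pi:ℂ) * x ^ 2 + c * x)‖)
      = fun x => Real.exp (-Real.pi * x ^ 2 + c.re * x) := by
    funext x
    rw [Complex.norm_exp, expo_re]
  rw [this]
  exact Real.tendsto_exp_atBot.comp h


lemma rmval (c : ℂ) :
    ∫ x : ℝ, (x:ℂ) * cexp (-(Real.pi:ℂ) * x ^ 2 + c * x)
      = c / (2 * (Real.pi:ℂ)) * ∫ x : ℝ, cexp (-(Real.pi:ℂ) * x ^ 2 + c * x) := by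
  set g : ℝ → ℂ := fun x => cexp (-(Real.pi:ℂ) * x ^ 2 + c * x) with hg
  show (∫ x : ℝ, (x:ℂ) * g x) = c / (2 * (Real.pi:ℂ)) * ∫ x : ℝ, g x
  have hderiv : ∀ x : ℝ, HasDerivAt g ((-2 * (Real.pi:ℂ) * x + c) * g x) x := by
    intro x
    have hF : HasDerivAt (fun z : ℂ => -(Real.pi:ℂ) * z ^ 2 + c * z)
        (-(Real.pi:ℂ) * (2 * (x:ℂ) ^ 1) + c * 1) (x:ℂ) :=
      ((hasDerivAt_pow 2 (x:ℂ)).const_mul (-(Real.pi:ℂ))).add ((hasDerivAt_id (x:ℂ)).const_mul c)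
    have := (hF.comp_ofReal).cexp
    convert this using 1
    ring
  have hint' : Integrable (fun x : ℝ => (-2 * (Real.pi:ℂ) * x + c) * g x) := by
    have : (fun x : ℝ => (-2 * (Real.pi:ℂ) * x + c) * g x)
        = fun x : ℝ => (-2 * (Real.pi:ℂ)) * (((x:ℝ):ℂ) * g x) + c * g x := by
      funext x; ring
    rw [this]
    exact ((rmint c).const_mul _).add ((rint c).const_mul _)
  have h0 : ∫ x : ℝ, (-2 * (Real.pi:ℂ) * x + c) * g x = 0 := by
    rw [integral_of_hasDerivAt_of_tendsto hderiv hint'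
      (g_tendsto_zero c _ (key_tendsto_atBot c)) (g_tendsto_zero c _ (key_tendsto_atTop c))]
    simp
  have hexp : ∫ x : ℝ, (-2 * (Real.pi:ℂ) * x + c) * g x
      = ((-2 * (Real.pi:ℂ)) * ∫ x : ℝ, (x:ℂ) * g x) + c * ∫ x : ℝ, g x := by
    rw [← integral_const_mul, ← integral_const_mul, ← integral_add
      ((rmint c).const_mul _) ((rint c).const_mul _)]
    congr 1; funext x; ring
  rw [hexp] at h0
  have hπ : (2 * (Real.pi:ℂ)) ≠ 0 := by
    simp [Complex.ofReal_ne_zero, Real.pi_ne_zero]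
  rw [div_mul_eq_mul_div, eq_div_iff hπ]
  linear_combination -h0


/-- The 1D complex-plane Gaussian kernel. -/
def gker (p q : ℂ) (v : ℂ) : ℂ :=
  cexp (-(Real.pi:ℂ) * (normSq v : ℂ) + p * (starRingEnd ℂ) v + q * v)

lemma integral_complex_eq (g : ℂ → ℂ) :
    ∫ v : ℂ, g v = ∫ pt : ℝ × ℝ, g (pt.1 + pt.2 * I) := by
  rw [← (Complex.volume_preserving_equiv_real_prod.symm).integral_comp
    Complex.measurableEquivRealProd.symm.measurableEmbedding g]
  congr 1
  funext pt
  simp [Complex.measurableEquivRealProd_symm_apply, Complex.mk_eq_add_mul_I]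

lemma integrable_complex_iff (g : ℂ → ℂ) :
    Integrable g ↔ Integrable (fun pt : ℝ × ℝ => g (pt.1 + pt.2 * I)) := by
  rw [← (Complex.volume_preserving_equiv_real_prod.symm).integrable_comp_emb
    Complex.measurableEquivRealProd.symm.measurableEmbedding]
  constructor <;> intro h <;> refine h.congr ?_ <;> filter_upwards with pt <;>
    simp [Function.comp, Complex.measurableEquivRealProd_symm_apply, Complex.mk_eq_add_mul_I]

lemma gker_split (p q : ℂ) (x y : ℝ) :
    gker p q (x + y * I)
      = cexp (-(Real.pi:ℂ) * x ^ 2 + (p + q) * x)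
        * cexp (-(Real.pi:ℂ) * y ^ 2 + ((q - p) * I) * y) := by
  rw [gker, ← Complex.exp_add]
  congr 1
  have h1 : normSq ((x:ℂ) + y * I) = x ^ 2 + y ^ 2 := by
    rw [Complex.normSq_add_mul_I]
  have h2 : (starRingEnd ℂ) ((x:ℂ) + y * I) = (x:ℂ) - y * I := by
    simp [map_add, map_mul, Complex.conj_ofReal, Complex.conj_I]; ring
  rw [h1, h2]
  push_cast
  ring

lemma cint (p q : ℂ) : Integrable (gker p q) := by
  rw [integrable_complex_iff]
  have : (fun pt : ℝ × ℝ => gker p q (pt.1 + pt.2 * I))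
      = fun pt : ℝ × ℝ => cexp (-(Real.pi:ℂ) * pt.1 ^ 2 + (p + q) * pt.1)
        * cexp (-(Real.pi:ℂ) * pt.2 ^ 2 + ((q - p) * I) * pt.2) := by
    funext pt; exact gker_split p q pt.1 pt.2
  rw [this]
  exact (rint (p + q)).mul_prod (rint ((q - p) * I))

lemma cval (p q : ℂ) : ∫ v : ℂ, gker p q v = cexp (p * q / (Real.pi:ℂ)) := by
  rw [integral_complex_eq]
  have : (fun pt : ℝ × ℝ => gker p q (pt.1 + pt.2 * I))
      = fun pt : ℝ × ℝ => cexp (-(Real.pi:ℂ) * pt.1 ^ 2 + (p + q) * pt.1)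
        * cexp (-(Real.pi:ℂ) * pt.2 ^ 2 + ((q - p) * I) * pt.2) := by
    funext pt; exact gker_split p q pt.1 pt.2
  rw [this, Measure.volume_eq_prod, integral_prod_mul (fun x : ℝ => cexp (-(Real.pi:ℂ) * x ^ 2 + (p + q) * x)) (fun y : ℝ => cexp (-(Real.pi:ℂ) * y ^ 2 + ((q - p) * I) * y)), rval, rval, ← Complex.exp_add]
  congr 1
  have hπ : ((Real.pi:ℂ)) ≠ 0 := by exact_mod_cast Real.pi_ne_zero
  field_simp
  ring_nf
  rw [Complex.I_sq]
  ring

lemma cre_int (p q : ℂ) :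
    Integrable (fun v : ℂ => ((v.re : ℝ) : ℂ) * gker p q v) := by
  rw [integrable_complex_iff]
  have : (fun pt : ℝ × ℝ => (((pt.1 + pt.2 * I : ℂ).re : ℝ) : ℂ) * gker p q (pt.1 + pt.2 * I))
      = fun pt : ℝ × ℝ => ((pt.1 : ℂ) * cexp (-(Real.pi:ℂ) * pt.1 ^ 2 + (p + q) * pt.1))
        * cexp (-(Real.pi:ℂ) * pt.2 ^ 2 + ((q - p) * I) * pt.2) := by
    funext pt
    rw [gker_split p q pt.1 pt.2]
    simp [mul_assoc]
  rw [this]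
  exact (rmint (p + q)).mul_prod (rint ((q - p) * I))

lemma cim_int (p q : ℂ) :
    Integrable (fun v : ℂ => ((v.im : ℝ) : ℂ) * gker p q v) := by
  rw [integrable_complex_iff]
  have : (fun pt : ℝ × ℝ => (((pt.1 + pt.2 * I : ℂ).im : ℝ) : ℂ) * gker p q (pt.1 + pt.2 * I))
      = fun pt : ℝ × ℝ => (cexp (-(Real.pi:ℂ) * pt.1 ^ 2 + (p + q) * pt.1))
        * ((pt.2 : ℂ) * cexp (-(Real.pi:ℂ) * pt.2 ^ 2 + ((q - p) * I) * pt.2)) := by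
    funext pt
    rw [gker_split p q pt.1 pt.2]
    simp; ring
  rw [this]
  exact (rint (p + q)).mul_prod (rmint ((q - p) * I))

lemma cre_val (p q : ℂ) :
    ∫ v : ℂ, ((v.re : ℝ) : ℂ) * gker p q v
      = (p + q) / (2 * (Real.pi:ℂ)) * ∫ v : ℂ, gker p q v := by
  rw [integral_complex_eq, integral_complex_eq (gker p q)]
  have h1 : (fun pt : ℝ × ℝ => (((pt.1 + pt.2 * I : ℂ).re : ℝ) : ℂ) * gker p q (pt.1 + pt.2 * I))
      = fun pt : ℝ × ℝ => ((pt.1 : ℂ) * cexp (-(Real.pi:ℂ) * pt.1 ^ 2 + (p + q) * pt.1))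
        * cexp (-(Real.pi:ℂ) * pt.2 ^ 2 + ((q - p) * I) * pt.2) := by
    funext pt
    rw [gker_split p q pt.1 pt.2]
    simp [mul_assoc]
  have h2 : (fun pt : ℝ × ℝ => gker p q (pt.1 + pt.2 * I))
      = fun pt : ℝ × ℝ => cexp (-(Real.pi:ℂ) * pt.1 ^ 2 + (p + q) * pt.1)
        * cexp (-(Real.pi:ℂ) * pt.2 ^ 2 + ((q - p) * I) * pt.2) := by
    funext pt; exact gker_split p q pt.1 pt.2
  rw [h1, h2, Measure.volume_eq_prod, integral_prod_mul (fun x : ℝ => (x:ℂ) * cexp (-(Real.pi:ℂ) * x ^ 2 + (p + q) * x)) (fun y : ℝ => cexp (-(Real.pi:ℂ) * y ^ 2 + ((q - p) * I) * y)),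
    integral_prod_mul (fun x : ℝ => cexp (-(Real.pi:ℂ) * x ^ 2 + (p + q) * x)) (fun y : ℝ => cexp (-(Real.pi:ℂ) * y ^ 2 + ((q - p) * I) * y)), rmval]
  ring

lemma cim_val (p q : ℂ) :
    ∫ v : ℂ, ((v.im : ℝ) : ℂ) * gker p q v
      = (q - p) * I / (2 * (Real.pi:ℂ)) * ∫ v : ℂ, gker p q v := by
  rw [integral_complex_eq, integral_complex_eq (gker p q)]
  have h1 : (fun pt : ℝ × ℝ => (((pt.1 + pt.2 * I : ℂ).im : ℝ) : ℂ) * gker p q (pt.1 + pt.2 * I))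
      = fun pt : ℝ × ℝ => (cexp (-(Real.pi:ℂ) * pt.1 ^ 2 + (p + q) * pt.1))
        * ((pt.2 : ℂ) * cexp (-(Real.pi:ℂ) * pt.2 ^ 2 + ((q - p) * I) * pt.2)) := by
    funext pt
    rw [gker_split p q pt.1 pt.2]
    simp; ring
  have h2 : (fun pt : ℝ × ℝ => gker p q (pt.1 + pt.2 * I))
      = fun pt : ℝ × ℝ => cexp (-(Real.pi:ℂ) * pt.1 ^ 2 + (p + q) * pt.1)
        * cexp (-(Real.pi:ℂ) * pt.2 ^ 2 + ((q - p) * I) * pt.2) := by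
    funext pt; exact gker_split p q pt.1 pt.2
  rw [h1, h2, Measure.volume_eq_prod, integral_prod_mul (fun x : ℝ => cexp (-(Real.pi:ℂ) * x ^ 2 + (p + q) * x)) (fun y : ℝ => (y:ℂ) * cexp (-(Real.pi:ℂ) * y ^ 2 + ((q - p) * I) * y)),
    integral_prod_mul (fun x : ℝ => cexp (-(Real.pi:ℂ) * x ^ 2 + (p + q) * x)) (fun y : ℝ => cexp (-(Real.pi:ℂ) * y ^ 2 + ((q - p) * I) * y)), rmval]
  ring


def pairEquiv (n : ℕ) : Fin n × Fin 2 ≃ Fin (2*n) where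
  toFun := fun p => ⟨2*p.1.val + p.2.val, by have := p.1.isLt; have := p.2.isLt; omega⟩
  invFun := fun j => (⟨j.val/2, by have := j.isLt; omega⟩, ⟨j.val % 2, by omega⟩)
  left_inv := by
    rintro ⟨i, b⟩
    have hb := b.isLt
    ext
    · simp; omega
    · simp; omega
  right_inv := by
    intro j
    ext
    simp; omega

lemma sum_pair {n : ℕ} (g : Fin (2*n) → ℂ) :
    ∑ j, g j = ∑ i : Fin n, (g ⟨2*i.val, by have := i.isLt; omega⟩
      + g ⟨2*i.val+1, by have := i.isLt; omega⟩) := by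
  rw [← Equiv.sum_comp (pairEquiv n) g, Fintype.sum_prod_type]
  refine Finset.sum_congr rfl fun i _ => ?_
  rw [Fin.sum_univ_two]
  congr 1 <;> · congr 1; exact Fin.ext (by simp [pairEquiv])

end BKAux


namespace BKAux
open Real Filter

variable {n : ℕ}

/-- per-coordinate kernel factor of `bergK z w * bergK w z'`. -/
def Kker (z z' : Fin n → ℂ) (l : Fin n) (v : ℂ) : ℂ :=
  cexp (-((Real.pi:ℂ)/2) * (Complex.normSq (z l) : ℂ)
      - ((Real.pi:ℂ)/2) * (Complex.normSq (z' l) : ℂ)) *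
    gker ((Real.pi:ℂ) * z l) ((Real.pi:ℂ) * (starRingEnd ℂ) (z' l)) v

lemma hpi : ((Real.pi:ℂ)) ≠ 0 := by exact_mod_cast Real.pi_ne_zero

lemma prodKk (z z' w : Fin n → ℂ) :
    bergK z w * bergK w z' = ∏ l, Kker z z' l (w l) := by
  unfold bergK Kker gker
  rw [← Complex.exp_add]
  simp_rw [← Complex.exp_add]
  rw [← Complex.exp_sum]
  congr 1
  rw [Finset.mul_sum, Finset.mul_sum, ← Finset.sum_add_distrib]
  refine Finset.sum_congr rfl fun l _ => ?_
  ring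

lemma Kint (z z' : Fin n → ℂ) (l : Fin n) : Integrable (Kker z z' l) :=
  (cint _ _).const_mul _

lemma Kval (z z' : Fin n → ℂ) (l : Fin n) :
    ∫ v : ℂ, Kker z z' l v
      = cexp (-((Real.pi:ℂ)/2) * (Complex.normSq (z l) : ℂ)
          - ((Real.pi:ℂ)/2) * (Complex.normSq (z' l) : ℂ))
        * cexp ((Real.pi:ℂ) * z l * (starRingEnd ℂ) (z' l)) := by
  unfold Kker
  rw [integral_const_mul, cval]
  congr 2
  rw [div_eq_iff hpi]
  ring

lemma prodVKk (z z' : Fin n → ℂ) :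
    ∏ l, (∫ v : ℂ, Kker z z' l v) = bergK z z' := by
  simp_rw [Kval]
  unfold bergK
  simp_rw [← Complex.exp_add]
  rw [← Complex.exp_sum]
  congr 1
  rw [Finset.mul_sum]
  refine Finset.sum_congr rfl fun l _ => ?_
  ring

/-- index of the complex coordinate corresponding to a real coordinate -/
def idx (j : Fin (2*n)) : Fin n := ⟨j.val/2, by have := j.isLt; omega⟩

def phi (j : Fin (2*n)) (v : ℂ) : ℂ := if j.val % 2 = 0 then (v.re:ℂ) else (v.im:ℂ)

def mu (z z' : Fin n → ℂ) (j : Fin (2*n)) : ℂ :=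
  if j.val % 2 = 0 then (z (idx j) + (starRingEnd ℂ) (z' (idx j))) / 2
  else (((starRingEnd ℂ) (z' (idx j)) - z (idx j)) * Complex.I) / 2

lemma mom_int (z z' : Fin n → ℂ) (j : Fin (2*n)) :
    Integrable (fun v : ℂ => phi j v * Kker z z' (idx j) v) := by
  unfold phi Kker
  split
  · refine ((cre_int ((Real.pi:ℂ) * z (idx j)) ((Real.pi:ℂ) * (starRingEnd ℂ) (z' (idx j)))).const_mul
      (cexp (-((Real.pi:ℂ)/2) * (Complex.normSq (z (idx j)) : ℂ)
        - ((Real.pi:ℂ)/2) * (Complex.normSq (z' (idx j)) : ℂ)))).congr ?_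
    filter_upwards with v
    ring
  · refine ((cim_int ((Real.pi:ℂ) * z (idx j)) ((Real.pi:ℂ) * (starRingEnd ℂ) (z' (idx j)))).const_mul
      (cexp (-((Real.pi:ℂ)/2) * (Complex.normSq (z (idx j)) : ℂ)
        - ((Real.pi:ℂ)/2) * (Complex.normSq (z' (idx j)) : ℂ)))).congr ?_
    filter_upwards with v
    ring

lemma mom_val (z z' : Fin n → ℂ) (j : Fin (2*n)) :
    ∫ v : ℂ, phi j v * Kker z z' (idx j) v
      = mu z z' j * ∫ v : ℂ, Kker z z' (idx j) v := by
  set l := idx j with hl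
  set p := (Real.pi:ℂ) * z l with hp
  set q := (Real.pi:ℂ) * (starRingEnd ℂ) (z' l) with hq
  set C := cexp (-((Real.pi:ℂ)/2) * (Complex.normSq (z l) : ℂ)
      - ((Real.pi:ℂ)/2) * (Complex.normSq (z' l) : ℂ)) with hC
  have hK : ∀ v : ℂ, Kker z z' l v = C * gker p q v := fun v => rfl
  unfold phi mu
  split
  · calc ∫ v : ℂ, (v.re:ℂ) * Kker z z' l v
        = ∫ v : ℂ, C * ((v.re:ℂ) * gker p q v) := by
          congr 1; funext v; rw [hK]; ring
      _ = C * ((p + q) / (2 * (Real.pi:ℂ)) * ∫ v : ℂ, gker p q v) := by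
          rw [integral_const_mul, cre_val]
      _ = (z l + (starRingEnd ℂ) (z' l)) / 2 * (C * ∫ v : ℂ, gker p q v) := by
          have hco : (p + q) / (2 * (Real.pi:ℂ)) = (z l + (starRingEnd ℂ) (z' l)) / 2 := by
            rw [hp, hq, div_eq_div_iff (by simp [Real.pi_ne_zero] : (2*(Real.pi:ℂ)) ≠ 0)
              (two_ne_zero)]
            ring
          rw [hco]
          ring
      _ = (z l + (starRingEnd ℂ) (z' l)) / 2 * ∫ v : ℂ, Kker z z' l v := by
          rw [show (∫ v : ℂ, Kker z z' l v) = ∫ v : ℂ, C * gker p q v from rfl,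
            integral_const_mul]
  · calc ∫ v : ℂ, (v.im:ℂ) * Kker z z' l v
        = ∫ v : ℂ, C * ((v.im:ℂ) * gker p q v) := by
          congr 1; funext v; rw [hK]; ring
      _ = C * ((q - p) * Complex.I / (2 * (Real.pi:ℂ)) * ∫ v : ℂ, gker p q v) := by
          rw [integral_const_mul, cim_val]
      _ = ((starRingEnd ℂ) (z' l) - z l) * Complex.I / 2 * (C * ∫ v : ℂ, gker p q v) := by
          have hco : (q - p) * Complex.I / (2 * (Real.pi:ℂ))
              = ((starRingEnd ℂ) (z' l) - z l) * Complex.I / 2 := by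
            rw [hp, hq, div_eq_div_iff (by simp [Real.pi_ne_zero] : (2*(Real.pi:ℂ)) ≠ 0)
              (two_ne_zero)]
            ring
          rw [hco]
          ring
      _ = ((starRingEnd ℂ) (z' l) - z l) * Complex.I / 2 * ∫ v : ℂ, Kker z z' l v := by
          rw [show (∫ v : ℂ, Kker z z' l v) = ∫ v : ℂ, C * gker p q v from rfl,
            integral_const_mul]

end BKAux

open BKAux

/-- For smooth `f : ℝ^{2n} → ℂ` and all `z, z' ∈ ℂⁿ`,
`∫ 𝒫(z,w) (Σ_j ∂f/∂Z_j(0) W_j) 𝒫(w,z') dW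
  = Σ_i (∂f/∂z_i(0) z_i + ∂f/∂z̄_i(0) z̄'_i) 𝒫(z,z')`. -/

theorem bergK_linear_term {n : ℕ} (f : (Fin n → ℂ) → ℂ) (hf : ContDiff ℝ (⊤ : ℕ∞) f)
    (z z' : Fin n → ℂ) :
    (∫ w : Fin n → ℂ,
        bergK z w * (∑ j : Fin (2 * n), realPDeriv j f 0 * realCoordC j w) * bergK w z')
      = (∑ i, (wirtingerD i f 0 * z i
            + wirtingerDBar i f 0 * (starRingEnd ℂ) (z' i))) * bergK z z' := by
  classical
  set G : Fin (2*n) → Fin n → ℂ → ℂ :=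
    fun j l v => if l = idx j then phi j v * Kker z z' l v else Kker z z' l v with hG
  have hGint : ∀ j l, Integrable (G j l) := by
    intro j l
    rcases eq_or_ne l (idx j) with h | h
    · subst h
      simpa only [hG, if_pos rfl, if_true] using mom_int z z' j
    · simpa only [hG, if_neg h] using Kint z z' l
  have hstep1 : ∀ w : Fin n → ℂ,
      bergK z w * (∑ j : Fin (2*n), realPDeriv j f 0 * realCoordC j w) * bergK w z'
        = ∑ j : Fin (2*n), realPDeriv j f 0 * ∏ l, G j l (w l) := by
    intro w
    have h1 : bergK z w * (∑ j : Fin (2*n), realPDeriv j f 0 * realCoordC j w) * bergK w z'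
        = ∑ j : Fin (2*n), realPDeriv j f 0
            * (realCoordC j w * (bergK z w * bergK w z')) := by
      rw [Finset.mul_sum, Finset.sum_mul]
      refine Finset.sum_congr rfl fun j _ => ?_
      ring
    rw [h1]
    refine Finset.sum_congr rfl fun j _ => ?_
    congr 1
    rw [prodKk z z' w]
    have hφ : realCoordC j w = phi j (w (idx j)) := rfl
    rw [hφ, hG]
    rw [Finset.prod_eq_mul_prod_sdiff_singleton_of_mem (Finset.mem_univ (idx j))
        (fun l => Kker z z' l (w l)),
      Finset.prod_eq_mul_prod_sdiff_singleton_of_mem (Finset.mem_univ (idx j))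
        (fun l => if l = idx j then phi j (w l) * Kker z z' l (w l) else Kker z z' l (w l))]
    rw [if_pos rfl, ← mul_assoc]
    congr 1
    refine (Finset.prod_congr rfl fun l hl => ?_).symm
    rw [if_neg]
    have := (Finset.mem_sdiff.mp hl).2
    simpa using this
  simp only [hstep1]
  rw [integral_finset_sum (μ := volume) Finset.univ
    (fun j _ => (Integrable.fintype_prod (fun l => hGint j l)).const_mul (realPDeriv j f 0))]
  have hj : ∀ j : Fin (2*n),
      (∫ w : Fin n → ℂ, realPDeriv j f 0 * ∏ l, G j l (w l))
        = realPDeriv j f 0 * mu z z' j * bergK z z' := by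
    intro j
    rw [integral_const_mul, volume_pi, MeasureTheory.integral_fintype_prod_eq_prod (ι := Fin n) (fun l => G j l)]
    have hgl : ∀ l, (∫ v : ℂ, G j l v)
        = (if l = idx j then mu z z' j else 1) * ∫ v : ℂ, Kker z z' l v := by
      intro l
      rcases eq_or_ne l (idx j) with h | h
      · subst h
        rw [if_pos rfl]
        simp only [hG, if_pos rfl]
        exact mom_val z z' j
      · rw [if_neg h, one_mul]
        simp only [hG, if_neg h]
    simp_rw [hgl]
    rw [Finset.prod_mul_distrib, prodVKk z z']
    rw [Finset.prod_ite_eq']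
    simp only [Finset.mem_univ, if_pos]
    ring
  simp_rw [hj]
  rw [← Finset.sum_mul]
  congr 1
  rw [sum_pair (fun j => realPDeriv j f 0 * mu z z' j)]
  refine Finset.sum_congr rfl fun i _ => ?_
  have hi := i.isLt
  set j0 : Fin (2*n) := ⟨2*i.val, by omega⟩ with hj0
  set j1 : Fin (2*n) := ⟨2*i.val+1, by omega⟩ with hj1
  have hidx0 : idx j0 = i := Fin.ext (show (2*i.val)/2 = i.val by omega)
  have hidx1 : idx j1 = i := Fin.ext (show (2*i.val+1)/2 = i.val by omega)
  have hm0 : (j0 : Fin (2*n)).val % 2 = 0 := show (2*i.val) % 2 = 0 by omega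
  have hm1 : ¬ ((j1 : Fin (2*n)).val % 2 = 0) := show ¬ ((2*i.val+1) % 2 = 0) by omega
  have hc0 : realPDeriv j0 f 0 = fderiv ℝ f 0 (Pi.single i 1) := by
    unfold realPDeriv coordDir
    rw [if_pos hm0]
    exact congrArg (fun t : Fin n => fderiv ℝ f 0 (Pi.single t (1:ℂ))) hidx0
  have hc1 : realPDeriv j1 f 0 = fderiv ℝ f 0 (Pi.single i Complex.I) := by
    unfold realPDeriv coordDir
    rw [if_neg hm1]
    exact congrArg (fun t : Fin n => fderiv ℝ f 0 (Pi.single t Complex.I)) hidx1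
  have hmu0 : mu z z' j0 = (z i + (starRingEnd ℂ) (z' i)) / 2 := by
    unfold mu
    rw [if_pos hm0, hidx0]
  have hmu1 : mu z z' j1 = (((starRingEnd ℂ) (z' i) - z i) * Complex.I) / 2 := by
    unfold mu
    rw [if_neg hm1, hidx1]
  rw [hc0, hc1, hmu0, hmu1]
  unfold wirtingerD wirtingerDBar
  ring
end
end
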